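/- Let γ be a regular cardinal, λ = γ⁺, and let η̄ = ⟨η_δ : δ ∈ S⟩ be a tree-like ladder system on a stationary set S ⊆ λ of limit ordinals of cofinality γ. If η̄ has γ-uniformization and ◊_γ holds, then η̄ has strong γ-uniformization. -/

import Mathlib

open CategoryTheory Cardinal

noncomputable section

/-- `C` is a club (closed unbounded set) in `κ`. -/
def IsClubIn (C : Set Ordinal.{0}) (κ : Ordinal.{0}) : Prop :=
  C ⊆ Set.Iio κ ∧ (∀ α < κ, ∃ β ∈ C, α ≤ β) ∧
    (∀ s : Set Ordinal.{0}, s ⊆ C → s.Nonempty → sSup s < κ → sSup s ∈ C)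

/-- `S` is stationary in `κ`: it meets every club of `κ`. -/
def IsStationaryIn (S : Set Ordinal.{0}) (κ : Ordinal.{0}) : Prop :=
  ∀ C : Set Ordinal.{0}, IsClubIn C κ → (S ∩ C).Nonempty

/-- `S ⊆ κ` is non-reflecting: `S ∩ α` is not stationary in `α` for any
limit ordinal `α < κ`. -/
def IsNonReflecting (S : Set Ordinal.{0}) (κ : Ordinal.{0}) : Prop :=
  ∀ α < κ, Order.IsSuccLimit α → ¬ IsStationaryIn (S ∩ Set.Iio α) α

/-- The diamond principle `◊_S` for `S ⊆ κ`. -/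
def DiamondOn (S : Set Ordinal.{0}) (κ : Ordinal.{0}) : Prop :=
  ∃ A : Ordinal.{0} → Set Ordinal.{0}, (∀ α ∈ S, A α ⊆ Set.Iio α) ∧
    ∀ X : Set Ordinal.{0}, X ⊆ Set.Iio κ →
      IsStationaryIn {α | α ∈ S ∧ X ∩ Set.Iio α = A α} κ

/-- The diamond principle `◊_κ`. -/
def DiamondAt (κ : Ordinal.{0}) : Prop := DiamondOn (Set.Iio κ) κ

/-- A ladder system on `S`: for each `δ ∈ S`, `η δ : γ → δ` is strictly
increasing with range cofinal in `δ`. -/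
def IsLadderSystem (S : Set Ordinal.{0}) (γord : Ordinal.{0})
    (η : Ordinal.{0} → Ordinal.{0} → Ordinal.{0}) : Prop :=
  ∀ δ ∈ S, StrictMonoOn (η δ) (Set.Iio γord) ∧ (∀ i < γord, η δ i < δ) ∧
    ∀ β < δ, ∃ i < γord, β ≤ η δ i

/-- The ladder system is tree-like. -/
def IsTreeLike (S : Set Ordinal.{0}) (γord : Ordinal.{0})
    (η : Ordinal.{0} → Ordinal.{0} → Ordinal.{0}) : Prop :=
  ∀ δ ∈ S, ∀ ν ∈ S, ∀ α < γord, ∀ β < γord,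
    η δ α = η ν β → α = β ∧ ∀ ρ ≤ α, η δ ρ = η ν ρ

/-- `μ`-uniformization for the ladder system `η` on `S ⊆ λ`: every family of
colourings `c_δ : rg(η_δ) → μ` is uniformized by a single `Ψ : λ → μ` from
some point `Ψ* δ` on. Ordinals below `μ.ord` encode the colours. -/
def HasUniformization (S : Set Ordinal.{0}) (γord lamord : Ordinal.{0})
    (η : Ordinal.{0} → Ordinal.{0} → Ordinal.{0}) (μ : Cardinal.{0}) : Prop :=
  ∀ cc : Ordinal.{0} → Ordinal.{0} → Ordinal.{0},
    (∀ δ ∈ S, ∀ i < γord, cc δ (η δ i) < μ.ord) →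
    ∃ (Ψ : Ordinal.{0} → Ordinal.{0}) (Ψs : Ordinal.{0} → Ordinal.{0}),
      (∀ β < lamord, Ψ β < μ.ord) ∧ (∀ δ ∈ S, Ψs δ < γord) ∧
      ∀ δ ∈ S, ∀ α, Ψs δ ≤ α → α < γord → Ψ (η δ α) = cc δ (η δ α)

/-- `rg(η_δ ↾ i)`: the range of the ladder `f` below `i`. -/
def rgUpTo (f : Ordinal.{0} → Ordinal.{0}) (i : Ordinal.{0}) : Set Ordinal.{0} :=
  f '' Set.Iio i

/-- `g` is (the graph of) a function with domain `D` and values in `R`. -/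
def IsFunGraphOn (g : Set (Ordinal.{0} × Ordinal.{0})) (D R : Set Ordinal.{0}) : Prop :=
  (∀ p ∈ g, p.1 ∈ D ∧ p.2 ∈ R) ∧ ∀ x ∈ D, ∃! y : Ordinal.{0}, (x, y) ∈ g

/-- The restriction of a graph to the domain `D`. -/
def graphRestrict (g : Set (Ordinal.{0} × Ordinal.{0})) (D : Set Ordinal.{0}) :
    Set (Ordinal.{0} × Ordinal.{0}) :=
  {p ∈ g | p.1 ∈ D}

/-- The graph of a total function `F` restricted to the domain `D`. -/
def graphOf (F : Ordinal.{0} → Ordinal.{0}) (D : Set Ordinal.{0}) :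
    Set (Ordinal.{0} × Ordinal.{0}) :=
  {p | p.1 ∈ D ∧ p.2 = F p.1}

/-- Strong `κ`-uniformization for the ladder system `η` on `S ⊆ λ = κ⁺`:
for every system `P̄ = ⟨P_α : α < λ⟩` with (i) `P_δ` a nonempty set of
functions `rg(η_δ) → δ ∩ κ` for `δ ∈ S`; (ii) `P_{η_δ(i)}` the set of
restrictions to `rg(η_δ↾(i+1))` of members of `P_δ`; (iii) at limits `i < γ`
every increasing sequence through the `P_{η_δ(j)}` has an extension in
`P_{η_δ(i)}` — there is a single `f : λ → κ` with `f↾rg(η_δ) ∈ P_δ` for all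
`δ ∈ S`. Partial functions are encoded by their graphs. -/
def HasStrongUniformization (S : Set Ordinal.{0}) (γord lamord κord : Ordinal.{0})
    (η : Ordinal.{0} → Ordinal.{0} → Ordinal.{0}) : Prop :=
  ∀ P : Ordinal.{0} → Set (Set (Ordinal.{0} × Ordinal.{0})),
    (∀ δ ∈ S, (P δ).Nonempty ∧
      ∀ f ∈ P δ, IsFunGraphOn f (rgUpTo (η δ) γord) (Set.Iio δ ∩ Set.Iio κord)) →
    (∀ δ ∈ S, ∀ i < γord,
      P (η δ i) = {g | ∃ f ∈ P δ, g = graphRestrict f (rgUpTo (η δ) (i + 1))}) →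
    (∀ δ ∈ S, ∀ i < γord, Order.IsSuccLimit i →
      ∀ fs : Ordinal.{0} → Set (Ordinal.{0} × Ordinal.{0}),
        (∀ j < i, fs j ∈ P (η δ j)) →
        (∀ j j' : Ordinal.{0}, j ≤ j' → j' < i → fs j ⊆ fs j') →
        ∃ g ∈ P (η δ i), (⋃ j ∈ Set.Iio i, fs j) ⊆ g) →
    ∃ F : Ordinal.{0} → Ordinal.{0}, (∀ β < lamord, F β < κord) ∧
      ∀ δ ∈ S, graphOf F (rgUpTo (η δ) γord) ∈ P δ


/-!
Since `◊_ω` fails, `γ` is uncountable. For `δ ∈ S` and `j < γ`, the `j`-th candidate is a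
member of `P_δ` whose values along `η_δ` below `j` are predicted by the diamond set `A_j`, if
there is one. The ladder point `η_δ(i)` is coloured by a `◊_γ`-code of the restrictions of the
candidates `j ≤ i` to `rg(η_δ↾(i+1))`, and `Ψ` uniformizes this colouring. The function `f` is
built by recursion along the tree: at `η_δ(i)` it decodes `A_{Ψ(η_δ(i))}` and continues with the
least decoded graph that lies in `P_{η_δ(i)}` and extends `f` so far (any such extension if there
is none); conditions (ii) and (iii) keep `f↾rg(η_δ↾(i+1)) ∈ P_{η_δ(i)}`. From `Ψ*(δ)` on the
decoding is correct, so `f` follows the least candidate agreeing with it so far. At a stage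
`α ≥ Ψ*(δ)` where `◊_γ` predicts `f ∘ η_δ`, the candidate `α` agrees with `f` below `α`; from then
on the least agreeing candidate never changes, so `f↾rg(η_δ)` is a candidate, a member of `P_δ`.
-/
open Set

theorem WellFoundedLT.exists_fix_eq {α M : Type*} [LT α] [WellFoundedLT α] [Inhabited M]
    (Φ : α → (α → M) → M) (hΦ : ∀ a G G', (∀ b < a, G b = G' b) → Φ a G = Φ a G') :
    ∃ F : α → M, ∀ a, F a = Φ a F := by
  classical
  refine ⟨wellFounded_lt.fix fun a IH => Φ a fun b => if h : b < a then IH b h else default,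
    fun a => ?_⟩
  rw [wellFounded_lt.fix_eq]
  exact hΦ a _ _ fun b hb => dif_pos hb

theorem isClubIn_closurePoints {gam : Cardinal.{0}} (hreg : gam.IsRegular) (hω : gam ≠ ℵ₀)
    {f : Ordinal.{0} → Ordinal.{0}} (hf : ∀ a < gam.ord, f a < gam.ord) {θ : Ordinal.{0}}
    (hθ : θ < gam.ord) :
    IsClubIn {x | θ < x ∧ x < gam.ord ∧ ∀ a < x, f a < x} gam.ord := by
  refine ⟨fun x hx => hx.2.1, fun α hα => ?_, fun s hs ⟨e, he⟩ hsup => ?_⟩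
  · let step : Ordinal.{0} → Ordinal.{0} := fun y => ⨆ a : Iio y, f a + 1
    have hstep : ∀ y < gam.ord, step y < gam.ord := fun y hy => by
      refine Ordinal.lift_iSup_add_one_lt_of_lt_cof ?_ fun a => hf a (a.2.trans hy)
      rw [← Ordinal.lift_cof, hreg.cof_ord, Cardinal.mk_Iio_ordinal, Cardinal.lift_uzero,
        Cardinal.lift_lt]
      exact Cardinal.lt_ord.mp hy
    have hstart : Order.succ (max α θ) < gam.ord :=
      (Cardinal.isSuccLimit_ord hreg.aleph0_le).succ_lt (max_lt hα hθ)
    refine ⟨Ordinal.nfp step (Order.succ (max α θ)), ⟨?_, ?_, fun a ha => ?_⟩, ?_⟩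
    · exact (le_max_right α θ).trans_lt ((Order.lt_succ _).trans_le (Ordinal.le_nfp _ _))
    · exact Cardinal.nfp_lt_ord_of_isRegular hreg hω hstep hstart
    · obtain ⟨n, hn⟩ := Ordinal.lt_nfp_iff.mp ha
      calc f a < f a + 1 := lt_add_one _
        _ ≤ step (step^[n] (Order.succ (max α θ))) :=
          Ordinal.le_iSup (fun b : Iio _ => f b + 1) ⟨a, hn⟩
        _ ≤ _ := by
          rw [← Function.iterate_succ_apply' step]
          exact Ordinal.iterate_le_nfp _ _ _
    · exact (le_max_left α θ).trans ((Order.le_succ _).trans (Ordinal.le_nfp _ _))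
  · have hbdd : BddAbove s := ⟨gam.ord, fun x hx => (hs hx).2.1.le⟩
    refine ⟨(hs he).1.trans_le (le_csSup hbdd he), hsup, fun a ha => ?_⟩
    obtain ⟨x, hx, hax⟩ := exists_lt_of_lt_csSup ⟨e, he⟩ ha
    exact ((hs hx).2.2 a hax).trans_le (le_csSup hbdd hx)

theorem not_diamondAt_omega0 : ¬ DiamondAt Ordinal.omega0 := by
  rintro ⟨A, -, hA⟩
  have hC : IsClubIn {x | 0 < x ∧ x < Ordinal.omega0} Ordinal.omega0 := by
    refine ⟨fun x hx => hx.2, fun α hα => ⟨α + 1, ⟨?_, ?_⟩, ?_⟩, fun s hs ⟨e, he⟩ hsup => ?_⟩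
    · exact Order.lt_add_one_iff.mpr zero_le
    · exact Ordinal.isSuccLimit_omega0.add_one_lt hα
    · exact le_self_add
    · exact ⟨(hs he).1.trans_le (le_csSup ⟨_, fun x hx => (hs hx).2.le⟩ he), hsup⟩
  obtain ⟨α, ⟨-, hguess⟩, hα0, hαω⟩ :=
    hA {b | b < Ordinal.omega0 ∧ b ∉ A (b + 1)} (fun b hb => hb.1) _ hC
  obtain ⟨m, rfl⟩ : ∃ m, α = m + 1 := by
    rcases Ordinal.zero_or_succ_or_isSuccLimit α with h | ⟨m, rfl⟩ | h
    · exact absurd h hα0.ne'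
    · exact ⟨m, Order.succ_eq_add_one m⟩
    · exact absurd (Ordinal.omega0_le_of_isSuccLimit h) hαω.not_ge
  have hm : m ∈ {b | b < Ordinal.omega0 ∧ b ∉ A (b + 1)} ∩ Iio (m + 1) ↔ m ∈ A (m + 1) := by
    rw [hguess]
  simp only [mem_inter_iff, mem_ofPred_eq, mem_Iio, Order.lt_add_one_iff, le_rfl, and_true] at hm
  have hmω : m < Ordinal.omega0 := (lt_add_one _).trans hαω
  tauto

theorem exists_pairing {c : Cardinal.{u}} (hc : ℵ₀ ≤ c) :
    ∃ pr : Ordinal.{u} × Ordinal.{u} → Ordinal.{u},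
      MapsTo pr (Iio c.ord ×ˢ Iio c.ord) (Iio c.ord) ∧ InjOn pr (Iio c.ord ×ˢ Iio c.ord) := by
  classical
  have hmk : #(Iio c.ord ×ˢ Iio c.ord : Set _) = #(Iio c.ord) := by
    rw [Cardinal.mk_congr (Equiv.Set.prod _ _), Cardinal.mk_prod, Cardinal.lift_id,
      Cardinal.mk_Iio_ordinal, Cardinal.card_ord, Cardinal.mul_eq_self (by simpa using hc)]
  obtain ⟨e⟩ := Cardinal.eq.mp hmk
  refine ⟨fun p => if h : p ∈ Iio c.ord ×ˢ Iio c.ord then (e ⟨p, h⟩ : Ordinal) else 0,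
    fun p hp => ?_, fun p hp q hq hpq => ?_⟩
  · simpa only [dif_pos hp] using (e ⟨p, hp⟩).2
  · simp only [dif_pos hp, dif_pos hq] at hpq
    exact congrArg Subtype.val (e.injective (Subtype.ext hpq))

theorem sSup_lt_ord_of_mk_lt {gam : Cardinal.{0}} (hreg : gam.IsRegular) {X : Set Ordinal.{0}}
    (hX : X ⊆ Iio gam.ord) (hmk : #X < Cardinal.lift.{1} gam) : sSup X < gam.ord := by
  refine Ordinal.sSup_lt_of_lt_cof ?_ hX
  rwa [← Ordinal.lift_cof, hreg.cof_ord]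

def agreeingIndices (v : Ordinal.{u} → Ordinal.{u} → Ordinal.{u}) (r : Ordinal.{u} → Ordinal.{u})
    (i : Ordinal.{u}) : Set Ordinal.{u} :=
  {j | j ≤ i ∧ ∀ k < i, v j k = r k}

/-- The least index agreeing with `r` at some stage keeps agreeing with it at all later stages,
since at each of them it is the least agreeing index, which `r` follows. -/
theorem exists_forall_eq_of_follows_least {γ α₀ : Ordinal.{u}}
    {v : Ordinal.{u} → Ordinal.{u} → Ordinal.{u}} {r : Ordinal.{u} → Ordinal.{u}} (hα₀ : α₀ < γ)
    (hstart : α₀ ∈ agreeingIndices v r α₀)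
    (hstep : ∀ i, α₀ ≤ i → i < γ → (agreeingIndices v r i).Nonempty →
      r i = v (sInf (agreeingIndices v r i)) i) :
    ∃ j, ∀ k < γ, v j k = r k := by
  set J := {j | ∃ i, α₀ ≤ i ∧ i < γ ∧ j ∈ agreeingIndices v r i}
  obtain ⟨i₁, hα₀i₁, -, hj₁⟩ : sInf J ∈ J := csInf_mem ⟨α₀, α₀, le_rfl, hα₀, hstart⟩
  have hfollow : ∀ k, i₁ ≤ k → k < γ → sInf J ∈ agreeingIndices v r k → v (sInf J) k = r k := by
    intro k hk hkγ hJk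
    have hleast : sInf (agreeingIndices v r k) = sInf J :=
      le_antisymm (csInf_le' hJk) (csInf_le' ⟨k, hα₀i₁.trans hk, hkγ, csInf_mem ⟨_, hJk⟩⟩)
    rw [hstep k (hα₀i₁.trans hk) hkγ ⟨_, hJk⟩, hleast]
  have hagree : ∀ i, i₁ ≤ i → i < γ → sInf J ∈ agreeingIndices v r i := by
    intro i
    induction i using WellFoundedLT.induction with
    | _ i IH =>
    intro hi hiγ
    refine ⟨hj₁.1.trans hi, fun k hk => ?_⟩
    rcases lt_or_ge k i₁ with hk₁ | hk₁
    · exact hj₁.2 k hk₁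
    · exact hfollow k hk₁ (hk.trans hiγ) (IH k hk hk₁ (hk.trans hiγ))
  refine ⟨sInf J, fun k hk => ?_⟩
  rcases lt_or_ge k i₁ with hk₁ | hk₁
  · exact hj₁.2 k hk₁
  · exact hfollow k hk₁ hk (hagree k hk₁ hk)

section Diamond

variable {gam : Cardinal.{0}} {A : Ordinal.{0} → Set Ordinal.{0}}

theorem exists_closed_guess (hreg : gam.IsRegular) (hω : gam ≠ ℵ₀)
    (hA : ∀ X ⊆ Iio gam.ord, IsStationaryIn {α | α ∈ Iio gam.ord ∧ X ∩ Iio α = A α} gam.ord)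
    {X : Set Ordinal.{0}} (hX : X ⊆ Iio gam.ord) {f : Ordinal.{0} → Ordinal.{0}}
    (hf : ∀ a < gam.ord, f a < gam.ord) {θ : Ordinal.{0}} (hθ : θ < gam.ord) :
    ∃ α, θ < α ∧ α < gam.ord ∧ (∀ a < α, f a < α) ∧ X ∩ Iio α = A α := by
  obtain ⟨α, ⟨-, hguess⟩, hθα, hα, hcl⟩ := hA X hX _ (isClubIn_closurePoints hreg hω hf hθ)
  exact ⟨α, hθα, hα, hcl, hguess⟩

theorem exists_eq_of_mk_lt (hreg : gam.IsRegular) (hω : gam ≠ ℵ₀)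
    (hA : ∀ X ⊆ Iio gam.ord, IsStationaryIn {α | α ∈ Iio gam.ord ∧ X ∩ Iio α = A α} gam.ord)
    {X : Set Ordinal.{0}} (hX : X ⊆ Iio gam.ord) (hmk : #X < Cardinal.lift.{1} gam) :
    ∃ α < gam.ord, A α = X := by
  have hγ : (0 : Ordinal) < gam.ord := Cardinal.ord_pos.mpr hreg.pos
  obtain ⟨α, hα, hαγ, -, hguess⟩ :=
    exists_closed_guess hreg hω hA hX (fun _ _ => hγ) (sSup_lt_ord_of_mk_lt hreg hX hmk)
  refine ⟨α, hαγ, hguess.symm.trans (inter_eq_left.mpr fun x hx => ?_)⟩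
  exact (le_csSup ⟨gam.ord, fun y hy => (hX hy).le⟩ hx).trans_lt hα

end Diamond

def graphVal (f : Set (Ordinal.{0} × Ordinal.{0})) (x : Ordinal.{0}) : Ordinal.{0} :=
  Classical.epsilon fun y => (x, y) ∈ f

section Graphs

variable {f : Set (Ordinal.{0} × Ordinal.{0})} {F G : Ordinal.{0} → Ordinal.{0}}
  {D D' R : Set Ordinal.{0}} {x y : Ordinal.{0}}

theorem graphVal_spec (h : ∃ y, (x, y) ∈ f) : (x, graphVal f x) ∈ f :=
  Classical.epsilon_spec h

theorem IsFunGraphOn.mem_iff (hf : IsFunGraphOn f D R) (hx : x ∈ D) :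
    (x, y) ∈ f ↔ y = graphVal f x := by
  obtain ⟨z, hz, huniq⟩ := hf.2 x hx
  rw [huniq _ (graphVal_spec ⟨z, hz⟩)]
  exact ⟨huniq y, fun h => h ▸ hz⟩

theorem IsFunGraphOn.eq_graphOf (hf : IsFunGraphOn f D R) : f = graphOf (graphVal f) D := by
  ext ⟨x, y⟩
  exact ⟨fun h => ⟨(hf.1 _ h).1, (hf.mem_iff (hf.1 _ h).1).1 h⟩,
    fun ⟨hx, hy⟩ => (hf.mem_iff hx).2 hy⟩

theorem IsFunGraphOn.graphVal_mem (hf : IsFunGraphOn f D R) (hx : x ∈ D) : graphVal f x ∈ R :=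
  (hf.1 _ ((hf.mem_iff hx).2 rfl)).2

theorem graphVal_graphOf (hx : x ∈ D) : graphVal (graphOf F D) x = F x :=
  (graphVal_spec (f := graphOf F D) ⟨F x, hx, rfl⟩).2

theorem graphOf_subset_graphOf_iff (h : D ⊆ D') : graphOf F D ⊆ graphOf G D' ↔ EqOn F G D :=
  ⟨fun hsub x hx => (hsub (show (x, F x) ∈ graphOf F D from ⟨hx, rfl⟩)).2,
    fun hFG _ ⟨hx, hy⟩ => ⟨h hx, hy.trans (hFG hx)⟩⟩

theorem graphOf_mono (h : D ⊆ D') : graphOf F D ⊆ graphOf F D' :=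
  (graphOf_subset_graphOf_iff h).2 fun _ _ => rfl

theorem graphOf_eq_graphOf_iff : graphOf F D = graphOf G D ↔ EqOn F G D :=
  ⟨fun h => (graphOf_subset_graphOf_iff subset_rfl).1 h.le, fun h => by
    ext p
    exact and_congr_right fun hp => by rw [h hp]⟩

theorem graphRestrict_graphOf : graphRestrict (graphOf F D) D' = graphOf F (D ∩ D') := by
  ext p
  exact and_right_comm

theorem IsFunGraphOn.graphRestrict_eq (hf : IsFunGraphOn f D R) (h : D' ⊆ D) :
    graphRestrict f D' = graphOf (graphVal f) D' := by
  conv_lhs => rw [hf.eq_graphOf]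
  rw [graphRestrict_graphOf, inter_eq_right.mpr h]

end Graphs

section LadderRange

variable {e e' : Ordinal.{0} → Ordinal.{0}} {i j : Ordinal.{0}}

theorem apply_mem_rgUpTo (e : Ordinal.{0} → Ordinal.{0}) {k : Ordinal.{0}} (h : k < i) :
    e k ∈ rgUpTo e i :=
  mem_image_of_mem e h

theorem rgUpTo_mono (e : Ordinal.{0} → Ordinal.{0}) (h : i ≤ j) : rgUpTo e i ⊆ rgUpTo e j :=
  image_mono (Iio_subset_Iio h)

theorem rgUpTo_zero (e : Ordinal.{0} → Ordinal.{0}) : rgUpTo e 0 = ∅ := by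
  simp [rgUpTo]

theorem rgUpTo_add_one (e : Ordinal.{0} → Ordinal.{0}) (i : Ordinal.{0}) :
    rgUpTo e (i + 1) = insert (e i) (rgUpTo e i) := by
  rw [rgUpTo, rgUpTo, ← Order.succ_eq_add_one, Order.Iio_succ, ← Iio_insert, image_insert_eq]

theorem rgUpTo_congr (h : ∀ k < i, e k = e' k) : rgUpTo e i = rgUpTo e' i :=
  image_congr h

end LadderRange

section NodeChoice

variable (Pβ : Set (Set (Ordinal.{0} × Ordinal.{0}))) (i : Ordinal.{0})
  (dec : Ordinal.{0} → Set (Ordinal.{0} × Ordinal.{0})) (Fm : Set (Ordinal.{0} × Ordinal.{0}))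

def validIndices : Set Ordinal.{0} :=
  {j | j ≤ i ∧ dec j ∈ Pβ ∧ Fm ⊆ dec j}

open Classical in
def nodeChoice : Set (Ordinal.{0} × Ordinal.{0}) :=
  if (validIndices Pβ i dec Fm).Nonempty then dec (sInf (validIndices Pβ i dec Fm))
  else Classical.epsilon fun g => g ∈ Pβ ∧ Fm ⊆ g

variable {Pβ i dec Fm}

theorem nodeChoice_spec (h : ∃ g ∈ Pβ, Fm ⊆ g) :
    nodeChoice Pβ i dec Fm ∈ Pβ ∧ Fm ⊆ nodeChoice Pβ i dec Fm := by
  unfold nodeChoice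
  split_ifs with hv
  · exact (csInf_mem hv).2
  · exact Classical.epsilon_spec h

theorem nodeChoice_of_nonempty (hv : (validIndices Pβ i dec Fm).Nonempty) :
    nodeChoice Pβ i dec Fm = dec (sInf (validIndices Pβ i dec Fm)) :=
  if_pos hv

end NodeChoice

/-- Conditions (i)–(iii) on the system `P̄` in `HasStrongUniformization`. -/
structure IsCoherentSystem (S : Set Ordinal.{0}) (γ κ : Ordinal.{0})
    (η : Ordinal.{0} → Ordinal.{0} → Ordinal.{0})
    (P : Ordinal.{0} → Set (Set (Ordinal.{0} × Ordinal.{0}))) : Prop where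
  nonempty : ∀ δ ∈ S, (P δ).Nonempty
  isFunGraphOn : ∀ δ ∈ S, ∀ f ∈ P δ,
    IsFunGraphOn f (rgUpTo (η δ) γ) (Set.Iio δ ∩ Set.Iio κ)
  node_eq : ∀ δ ∈ S, ∀ i < γ,
    P (η δ i) = {g | ∃ f ∈ P δ, g = graphRestrict f (rgUpTo (η δ) (i + 1))}
  exists_superset : ∀ δ ∈ S, ∀ i < γ, Order.IsSuccLimit i →
    ∀ fs : Ordinal.{0} → Set (Ordinal.{0} × Ordinal.{0}),
      (∀ j < i, fs j ∈ P (η δ j)) →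
      (∀ j j' : Ordinal.{0}, j ≤ j' → j' < i → fs j ⊆ fs j') →
      ∃ g ∈ P (η δ i), (⋃ j ∈ Set.Iio i, fs j) ⊆ g

namespace IsCoherentSystem

variable {S : Set Ordinal.{0}} {γ κ δ i : Ordinal.{0}} {η : Ordinal.{0} → Ordinal.{0} → Ordinal.{0}}
  {P : Ordinal.{0} → Set (Set (Ordinal.{0} × Ordinal.{0}))}

theorem graphVal_lt (hP : IsCoherentSystem S γ κ η P) (hδ : δ ∈ S)
    {f : Set (Ordinal.{0} × Ordinal.{0})} (hf : f ∈ P δ) {k : Ordinal.{0}} (hk : k < γ) :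
    graphVal f (η δ k) < κ :=
  ((hP.isFunGraphOn δ hδ f hf).graphVal_mem ⟨k, hk, rfl⟩).2

theorem mem_node_iff (hP : IsCoherentSystem S γ κ η P) (hδ : δ ∈ S) (hi : i < γ)
    {g : Set (Ordinal.{0} × Ordinal.{0})} :
    g ∈ P (η δ i) ↔ ∃ f ∈ P δ, g = graphOf (graphVal f) (rgUpTo (η δ) (i + 1)) := by
  rw [hP.node_eq δ hδ i hi]
  refine exists_congr fun f => and_congr_right fun hf => ?_
  rw [(hP.isFunGraphOn δ hδ f hf).graphRestrict_eq (rgUpTo_mono _ (Order.add_one_le_of_lt hi))]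

theorem exists_superset_graphOf (hP : IsCoherentSystem S γ κ η P) (hδ : δ ∈ S) (hi : i < γ)
    {G : Ordinal.{0} → Ordinal.{0}}
    (hG : ∀ k < i, graphOf G (rgUpTo (η δ) (k + 1)) ∈ P (η δ k)) :
    ∃ g ∈ P (η δ i), graphOf G (rgUpTo (η δ) i) ⊆ g := by
  rcases Ordinal.zero_or_succ_or_isSuccLimit i with rfl | ⟨k, rfl⟩ | hlim
  · obtain ⟨f, hf⟩ := hP.nonempty δ hδ
    refine ⟨_, (hP.mem_node_iff hδ hi).2 ⟨f, hf, rfl⟩, ?_⟩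
    rw [rgUpTo_zero]
    exact fun p hp => absurd hp.1 (notMem_empty _)
  · rw [Order.succ_eq_add_one] at hi hG ⊢
    obtain ⟨f, hf, hfG⟩ := (hP.mem_node_iff hδ ((lt_add_one _).trans hi)).1
      (hG k (lt_add_one _))
    refine ⟨_, (hP.mem_node_iff hδ hi).2 ⟨f, hf, rfl⟩, ?_⟩
    rw [hfG]
    exact graphOf_mono (rgUpTo_mono _ le_self_add)
  · obtain ⟨g, hg, hsub⟩ := hP.exists_superset δ hδ i hi hlim
      (fun k => graphOf G (rgUpTo (η δ) (k + 1))) hG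
      fun j j' hjj' _ => graphOf_mono (rgUpTo_mono _ (add_le_add_left hjj' 1))
    refine ⟨g, hg, fun p ⟨⟨k, hk, hp⟩, hp2⟩ => hsub (mem_biUnion hk ?_)⟩
    exact ⟨⟨k, lt_add_one k, hp⟩, hp2⟩

theorem graphOf_mem_node (hP : IsCoherentSystem S γ κ η P) (hδ : δ ∈ S)
    {dec : Ordinal.{0} → Ordinal.{0} → Set (Ordinal.{0} × Ordinal.{0})}
    {F : Ordinal.{0} → Ordinal.{0}}
    (hF : ∀ i < γ, F (η δ i) =
      graphVal (nodeChoice (P (η δ i)) i (dec i) (graphOf F (rgUpTo (η δ) i))) (η δ i)) :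
    ∀ i < γ, graphOf F (rgUpTo (η δ) (i + 1)) ∈ P (η δ i) := by
  intro i
  induction i using WellFoundedLT.induction with
  | _ i IH =>
  intro hi
  obtain ⟨hc, hsub⟩ := nodeChoice_spec (i := i) (dec := dec i)
    (hP.exists_superset_graphOf hδ hi fun k hk => IH k hk (hk.trans hi))
  obtain ⟨f, -, hcf⟩ := (hP.mem_node_iff hδ hi).1 hc
  have hFi := hF i hi
  rw [hcf] at hsub hFi
  suffices graphOf F (rgUpTo (η δ) (i + 1)) = graphOf (graphVal f) (rgUpTo (η δ) (i + 1)) by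
    rwa [this, ← hcf]
  rw [graphOf_eq_graphOf_iff, rgUpTo_add_one]
  rintro x (rfl | hx)
  · rw [hFi, graphVal_graphOf (apply_mem_rgUpTo _ (lt_add_one i))]
  · exact (graphOf_subset_graphOf_iff (rgUpTo_mono _ le_self_add)).1 hsub hx

theorem exists_eq_of_graphOf_mem 
    (hP : IsCoherentSystem S γ κ η P) (hδ : δ ∈ S) (hi : i < γ) {F : Ordinal.{0} → Ordinal.{0}}
    (h : graphOf F (rgUpTo (η δ) (i + 1)) ∈ P (η δ i)) :
    ∃ f ∈ P δ, ∀ k ≤ i, graphVal f (η δ k) = F (η δ k) := by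
  obtain ⟨f, hf, hFf⟩ := (hP.mem_node_iff hδ hi).1 h
  exact ⟨f, hf, fun k hk =>
    (graphOf_eq_graphOf_iff.1 hFf (apply_mem_rgUpTo _ (Order.lt_add_one_iff.2 hk))).symm⟩

theorem apply_lt_of_graphOf_mem 
    (hP : IsCoherentSystem S γ κ η P) (hδ : δ ∈ S) (hi : i < γ) {F : Ordinal.{0} → Ordinal.{0}}
    (h : graphOf F (rgUpTo (η δ) (i + 1)) ∈ P (η δ i)) : F (η δ i) < κ := by
  obtain ⟨f, hf, hfF⟩ := hP.exists_eq_of_graphOf_mem hδ hi h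
  exact hfF i le_rfl ▸ hP.graphVal_lt hδ hf hi

end IsCoherentSystem

section Decoding

variable (γ : Ordinal.{0}) (pr : Ordinal.{0} × Ordinal.{0} → Ordinal.{0})

def decodeGraph (e : Ordinal.{0} → Ordinal.{0}) (i : Ordinal.{0}) (a : Set Ordinal.{0})
    (j : Ordinal.{0}) : Set (Ordinal.{0} × Ordinal.{0}) :=
  {p | ∃ k ≤ i, p.1 = e k ∧ p.2 < γ ∧ pr (pr (j, k), p.2) ∈ a}

def nodeValue (P : Ordinal.{0} → Set (Set (Ordinal.{0} × Ordinal.{0})))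
    (code : Ordinal.{0} → Set Ordinal.{0}) (e : Ordinal.{0} → Ordinal.{0}) (i : Ordinal.{0})
    (Fm : Set (Ordinal.{0} × Ordinal.{0})) : Ordinal.{0} :=
  graphVal (nodeChoice (P (e i)) i (decodeGraph γ pr e i (code (e i))) Fm) (e i)

variable {γ pr} {e e' : Ordinal.{0} → Ordinal.{0}} {i : Ordinal.{0}}

theorem decodeGraph_congr (h : ∀ k ≤ i, e k = e' k) (a : Set Ordinal.{0}) :
    decodeGraph γ pr e i a = decodeGraph γ pr e' i a := by
  ext j p
  exact exists_congr fun k => and_congr_right fun hk => by rw [h k hk]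

theorem nodeValue_congr (P : Ordinal.{0} → Set (Set (Ordinal.{0} × Ordinal.{0})))
    (code : Ordinal.{0} → Set Ordinal.{0}) (Fm : Set (Ordinal.{0} × Ordinal.{0}))
    (h : ∀ k ≤ i, e k = e' k) : nodeValue γ pr P code e i Fm = nodeValue γ pr P code e' i Fm := by
  simp only [nodeValue, decodeGraph_congr h, h i le_rfl]

end Decoding

theorem exists_ladder_recursion {S : Set Ordinal.{0}} {γ : Ordinal.{0}}
    {η : Ordinal.{0} → Ordinal.{0} → Ordinal.{0}}
    (hmono : ∀ δ ∈ S, StrictMonoOn (η δ) (Iio γ)) (htl : IsTreeLike S γ η)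
    (Φ : (Ordinal.{0} → Ordinal.{0}) → Ordinal.{0} → Set (Ordinal.{0} × Ordinal.{0}) → Ordinal.{0})
    (hΦ : ∀ e e' i Fm, (∀ k ≤ i, e k = e' k) → Φ e i Fm = Φ e' i Fm) :
    ∃ F : Ordinal.{0} → Ordinal.{0}, (∀ β, (∀ δ ∈ S, ∀ i < γ, η δ i ≠ β) → F β = 0) ∧
      ∀ δ ∈ S, ∀ i < γ, F (η δ i) = Φ (η δ) i (graphOf F (rgUpTo (η δ) i)) := by
  classical
  let IsNode (β : Ordinal.{0}) : Prop :=
    ∃ q : Ordinal.{0} × Ordinal.{0}, q.1 ∈ S ∧ q.2 < γ ∧ η q.1 q.2 = β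
  obtain ⟨F, hF⟩ := WellFoundedLT.exists_fix_eq (fun β G =>
      if h : IsNode β then
        Φ (η h.choose.1) h.choose.2 (graphOf G (rgUpTo (η h.choose.1) h.choose.2))
      else 0) fun β G G' hGG' => by
    split_ifs with h
    · obtain ⟨hδ, hi, hβ⟩ := h.choose_spec
      refine congrArg (Φ _ _) (graphOf_eq_graphOf_iff.2 ?_)
      rintro _ ⟨k, hk, rfl⟩
      exact hGG' _ ((hmono _ hδ (mem_Iio.2 (hk.trans hi)) hi hk).trans_eq hβ)
    · rfl
  refine ⟨F, fun β hβ => ?_, fun δ hδ i hi => ?_⟩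
  · rw [hF, dif_neg]
    rintro ⟨⟨δ, i⟩, hδ, hi, rfl⟩
    exact hβ δ hδ i hi rfl
  · have h : IsNode (η δ i) := ⟨(δ, i), hδ, hi, rfl⟩
    rw [hF, dif_pos h]
    have hq := h.choose_spec
    generalize h.choose = q at hq ⊢
    obtain ⟨δ', i'⟩ := q
    obtain ⟨hδ', hi', he⟩ := hq
    obtain ⟨rfl, hagree⟩ := htl δ' hδ' δ hδ i' hi' i hi he
    rw [hΦ _ _ _ _ hagree, rgUpTo_congr fun k hk => hagree k hk.le]

section Candidates

variable (Q : Set (Set (Ordinal.{0} × Ordinal.{0}))) (e : Ordinal.{0} → Ordinal.{0})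
  (A : Ordinal.{0} → Set Ordinal.{0}) (pr : Ordinal.{0} × Ordinal.{0} → Ordinal.{0})

def guessedAt (j : Ordinal.{0}) : Set (Set (Ordinal.{0} × Ordinal.{0})) :=
  {f ∈ Q | ∀ k < j, pr (k, graphVal f (e k)) ∈ A j}

open Classical in
def candidate (j : Ordinal.{0}) : Set (Ordinal.{0} × Ordinal.{0}) :=
  if (guessedAt Q e A pr j).Nonempty then Classical.epsilon (· ∈ guessedAt Q e A pr j)
  else Classical.epsilon (· ∈ Q)

def candidateVal (j k : Ordinal.{0}) : Ordinal.{0} :=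
  graphVal (candidate Q e A pr j) (e k)

def candidateCode (i : Ordinal.{0}) : Set Ordinal.{0} :=
  (fun q : Ordinal.{0} × Ordinal.{0} => pr (pr q, candidateVal Q e A pr q.1 q.2)) ''
    Iic i ×ˢ Iic i

variable {Q e A pr} {j : Ordinal.{0}}

theorem candidate_mem (hQ : Q.Nonempty) : candidate Q e A pr j ∈ Q := by
  unfold candidate
  split_ifs with h
  · exact (Classical.epsilon_spec h).1
  · exact Classical.epsilon_spec hQ

theorem candidate_mem_guessedAt (h : (guessedAt Q e A pr j).Nonempty) :
    candidate Q e A pr j ∈ guessedAt Q e A pr j := by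
  rw [candidate, if_pos h]
  exact Classical.epsilon_spec h

theorem mk_candidateCode_lt {gam : Cardinal.{0}} (hgam : ℵ₀ ≤ gam) {i : Ordinal.{0}}
    (hi : i < gam.ord) : #(candidateCode Q e A pr i) < Cardinal.lift.{1} gam := by
  have hIic : #(Iic i) < Cardinal.lift.{1} gam := by
    rw [← Order.Iio_succ, Cardinal.mk_Iio_ordinal, Cardinal.lift_lt, ← Cardinal.lt_ord]
    exact (Cardinal.isSuccLimit_ord hgam).succ_lt hi
  refine Cardinal.mk_image_le.trans_lt ?_
  rw [Cardinal.mk_congr (Equiv.Set.prod _ _), Cardinal.mk_prod, Cardinal.lift_id]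
  exact Cardinal.mul_lt_of_lt (by simpa using hgam) hIic hIic

end Candidates

theorem StrictMonoOn.csInf_setOf_eq {γ i : Ordinal.{0}} {e : Ordinal.{0} → Ordinal.{0}}
    (he : StrictMonoOn e (Iio γ)) (hi : i < γ) : sInf {k | e k = e i} = i :=
  le_antisymm (csInf_le' rfl) (le_csInf ⟨i, rfl⟩ fun _ hk =>
    not_lt.1 fun hki => (he (mem_Iio.2 (hki.trans hi)) hi hki).ne hk)

/-- `sInf {i | η δ i = β}` is the level of `β` on the ladder `η δ`. -/
def ladderColouring (γ : Ordinal.{0}) (P : Ordinal.{0} → Set (Set (Ordinal.{0} × Ordinal.{0})))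
    (η : Ordinal.{0} → Ordinal.{0} → Ordinal.{0}) (A : Ordinal.{0} → Set Ordinal.{0})
    (pr : Ordinal.{0} × Ordinal.{0} → Ordinal.{0}) (δ β : Ordinal.{0}) : Ordinal.{0} :=
  Classical.epsilon fun α => α < γ ∧ A α = candidateCode (P δ) (η δ) A pr (sInf {i | η δ i = β})

section Colouring

variable {gam : Cardinal.{0}} {S : Set Ordinal.{0}} {γ δ i j : Ordinal.{0}}
  {η : Ordinal.{0} → Ordinal.{0} → Ordinal.{0}}
  {P : Ordinal.{0} → Set (Set (Ordinal.{0} × Ordinal.{0}))} {A : Ordinal.{0} → Set Ordinal.{0}}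
  {pr : Ordinal.{0} × Ordinal.{0} → Ordinal.{0}}

theorem IsCoherentSystem.candidateVal_lt {κ : Ordinal.{0}} (hP : IsCoherentSystem S γ κ η P)
    (hδ : δ ∈ S) {k : Ordinal.{0}} (hk : k < γ) : candidateVal (P δ) (η δ) A pr j k < κ :=
  hP.graphVal_lt hδ (candidate_mem (hP.nonempty δ hδ)) hk

theorem ladderColouring_spec (hreg : gam.IsRegular) (hω : gam ≠ ℵ₀)
    (hA : ∀ X ⊆ Iio gam.ord, IsStationaryIn {α | α ∈ Iio gam.ord ∧ X ∩ Iio α = A α} gam.ord)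
    (hP : IsCoherentSystem S gam.ord gam.ord η P)
    (hpr : MapsTo pr (Iio gam.ord ×ˢ Iio gam.ord) (Iio gam.ord)) (hδ : δ ∈ S)
    (hmono : StrictMonoOn (η δ) (Iio gam.ord)) (hi : i < gam.ord) :
    ladderColouring gam.ord P η A pr δ (η δ i) < gam.ord ∧
      A (ladderColouring gam.ord P η A pr δ (η δ i)) = candidateCode (P δ) (η δ) A pr i := by
  have hsub : candidateCode (P δ) (η δ) A pr i ⊆ Iio gam.ord := by
    rintro _ ⟨⟨j, k⟩, ⟨hj, hk⟩, rfl⟩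
    have hkγ : k < gam.ord := lt_of_le_of_lt hk hi
    exact hpr ⟨hpr ⟨lt_of_le_of_lt hj hi, hkγ⟩, hP.candidateVal_lt hδ hkγ⟩
  rw [ladderColouring, hmono.csInf_setOf_eq hi]
  exact Classical.epsilon_spec
    (exists_eq_of_mk_lt hreg hω hA hsub (mk_candidateCode_lt hreg.aleph0_le hi))

theorem decodeGraph_candidateCode (hP : IsCoherentSystem S γ γ η P)
    (hpr : MapsTo pr (Iio γ ×ˢ Iio γ) (Iio γ)) (hinj : InjOn pr (Iio γ ×ˢ Iio γ)) (hδ : δ ∈ S)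
    (hi : i < γ) (hj : j ≤ i) :
    decodeGraph γ pr (η δ) i (candidateCode (P δ) (η δ) A pr i) j =
      graphOf (graphVal (candidate (P δ) (η δ) A pr j)) (rgUpTo (η δ) (i + 1)) := by
  have hlt : ∀ {k}, k ≤ i → k < γ := fun hk => lt_of_le_of_lt hk hi
  ext ⟨x, y⟩
  constructor
  · rintro ⟨k, hk, rfl, hy, ⟨j', k'⟩, ⟨hj', hk'⟩, heq⟩
    obtain ⟨hpair, rfl⟩ := Prod.mk.inj (hinj
      (show (pr (j', k'), candidateVal (P δ) (η δ) A pr j' k') ∈ Iio γ ×ˢ Iio γ from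
        ⟨hpr ⟨hlt hj', hlt hk'⟩, hP.candidateVal_lt hδ (hlt hk')⟩)
      (show (pr (j, k), y) ∈ Iio γ ×ˢ Iio γ from ⟨hpr ⟨hlt hj, hlt hk⟩, hy⟩) heq)
    obtain ⟨rfl, rfl⟩ := Prod.mk.inj (hinj ⟨hlt hj', hlt hk'⟩ ⟨hlt hj, hlt hk⟩ hpair)
    exact ⟨apply_mem_rgUpTo _ (Order.lt_add_one_iff.2 hk), rfl⟩
  · rintro ⟨⟨k, hk, rfl⟩, hy : y = candidateVal (P δ) (η δ) A pr j k⟩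
    subst hy
    have hk : k ≤ i := Order.lt_add_one_iff.1 hk
    exact ⟨k, hk, rfl, hP.candidateVal_lt hδ (hlt hk), (j, k), ⟨hj, hk⟩, rfl⟩

theorem validIndices_candidateCode (hP : IsCoherentSystem S γ γ η P)
    (hpr : MapsTo pr (Iio γ ×ˢ Iio γ) (Iio γ)) (hinj : InjOn pr (Iio γ ×ˢ Iio γ)) (hδ : δ ∈ S)
    (hi : i < γ) (G : Ordinal.{0} → Ordinal.{0}) :
    validIndices (P (η δ i)) i (decodeGraph γ pr (η δ) i (candidateCode (P δ) (η δ) A pr i))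
        (graphOf G (rgUpTo (η δ) i)) =
      agreeingIndices (candidateVal (P δ) (η δ) A pr) (fun k => G (η δ k)) i := by
  ext j
  refine and_congr_right fun hj => ?_
  rw [decodeGraph_candidateCode hP hpr hinj hδ hi hj, hP.mem_node_iff hδ hi,
    graphOf_subset_graphOf_iff (rgUpTo_mono _ le_self_add)]
  refine ⟨fun h k hk => (h.2 (apply_mem_rgUpTo _ hk)).symm,
    fun h => ⟨⟨_, candidate_mem (hP.nonempty δ hδ), rfl⟩, ?_⟩⟩
  rintro _ ⟨k, hk, rfl⟩
  exact (h k hk).symm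

theorem nodeValue_candidateCode (hP : IsCoherentSystem S γ γ η P)
    (hpr : MapsTo pr (Iio γ ×ˢ Iio γ) (Iio γ)) (hinj : InjOn pr (Iio γ ×ˢ Iio γ)) (hδ : δ ∈ S)
    (hi : i < γ) {code : Ordinal.{0} → Set Ordinal.{0}}
    (hcode : code (η δ i) = candidateCode (P δ) (η δ) A pr i) {G : Ordinal.{0} → Ordinal.{0}}
    (hv : (agreeingIndices (candidateVal (P δ) (η δ) A pr) (fun k => G (η δ k)) i).Nonempty) :
    nodeValue γ pr P code (η δ) i (graphOf G (rgUpTo (η δ) i)) =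
      candidateVal (P δ) (η δ) A pr
        (sInf (agreeingIndices (candidateVal (P δ) (η δ) A pr) (fun k => G (η δ k)) i)) i := by
  have hvalid := validIndices_candidateCode hP hpr hinj hδ hi G (A := A)
  rw [nodeValue, hcode, nodeChoice_of_nonempty (hvalid ▸ hv), hvalid,
    decodeGraph_candidateCode hP hpr hinj hδ hi (csInf_mem hv).1,
    graphVal_graphOf (apply_mem_rgUpTo _ (lt_add_one i)), candidateVal]

theorem mem_agreeingIndices_of_guess (hP : IsCoherentSystem S γ γ η P)
    (hinj : InjOn pr (Iio γ ×ˢ Iio γ)) (hδ : δ ∈ S) {r : Ordinal.{0} → Ordinal.{0}}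
    (hr : ∀ k < γ, r k < γ) {α : Ordinal.{0}} (hα : α < γ) (hcl : ∀ k < α, pr (k, r k) < α)
    (hguess : (fun k => pr (k, r k)) '' Iio γ ∩ Iio α = A α)
    (hf : ∃ f ∈ P δ, ∀ k < α, graphVal f (η δ k) = r k) :
    α ∈ agreeingIndices (candidateVal (P δ) (η δ) A pr) r α := by
  have hguessed : ∀ g ∈ P δ,
      g ∈ guessedAt (P δ) (η δ) A pr α ↔ ∀ k < α, graphVal g (η δ k) = r k := by
    refine fun g hg => ⟨fun h k hk => ?_, fun h => ⟨hg, fun k hk => ?_⟩⟩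
    · have hmem := h.2 k hk
      rw [← hguess] at hmem
      obtain ⟨⟨k', hk', heq⟩, -⟩ := hmem
      obtain ⟨rfl, h'⟩ := Prod.mk.inj (hinj
        (show (k', r k') ∈ Iio γ ×ˢ Iio γ from ⟨hk', hr k' hk'⟩)
        (show (k, graphVal g (η δ k)) ∈ Iio γ ×ˢ Iio γ from
          ⟨hk.trans hα, hP.graphVal_lt hδ hg (hk.trans hα)⟩) heq)
      exact h'.symm
    · rw [← hguess, h k hk]
      exact ⟨mem_image_of_mem _ (hk.trans hα), hcl k hk⟩
  obtain ⟨f, hf, hfr⟩ := hf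
  have hc := candidate_mem_guessedAt ⟨f, (hguessed f hf).2 hfr⟩
  exact ⟨le_rfl, (hguessed _ hc.1).1 hc⟩

theorem graphOf_mem_of_diamond (hreg : gam.IsRegular) (hω : gam ≠ ℵ₀)
    (hA : ∀ X ⊆ Iio gam.ord, IsStationaryIn {α | α ∈ Iio gam.ord ∧ X ∩ Iio α = A α} gam.ord)
    (hP : IsCoherentSystem S gam.ord gam.ord η P)
    (hpr : MapsTo pr (Iio gam.ord ×ˢ Iio gam.ord) (Iio gam.ord))
    (hinj : InjOn pr (Iio gam.ord ×ˢ Iio gam.ord)) {ν : Ordinal.{0}} (hν : ν ∈ S)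
    (hmono : StrictMonoOn (η ν) (Iio gam.ord)) {Ψ : Ordinal.{0} → Ordinal.{0}} {θ : Ordinal.{0}}
    (hθ : θ < gam.ord)
    (hΨ : ∀ i, θ ≤ i → i < gam.ord → Ψ (η ν i) = ladderColouring gam.ord P η A pr ν (η ν i))
    {F : Ordinal.{0} → Ordinal.{0}}
    (hF : ∀ i < gam.ord, F (η ν i) =
      nodeValue gam.ord pr P (fun β => A (Ψ β)) (η ν) i (graphOf F (rgUpTo (η ν) i))) :
    graphOf F (rgUpTo (η ν) gam.ord) ∈ P ν := by
  have hnode := hP.graphOf_mem_node hν hF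
  have hr : ∀ k < gam.ord, F (η ν k) < gam.ord := fun k hk =>
    hP.apply_lt_of_graphOf_mem hν hk (hnode k hk)
  have hpair : ∀ k < gam.ord, pr (k, F (η ν k)) < gam.ord := fun k hk => hpr ⟨hk, hr k hk⟩
  obtain ⟨α₀, hθα₀, hα₀, hcl, hguess⟩ :=
    exists_closed_guess hreg hω hA (image_subset_iff.2 hpair) hpair hθ
  have hstart := mem_agreeingIndices_of_guess hP hinj hν hr hα₀ hcl hguess (by
    obtain ⟨f, hf, hfF⟩ := hP.exists_eq_of_graphOf_mem hν hα₀ (hnode α₀ hα₀)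
    exact ⟨f, hf, fun k hk => hfF k hk.le⟩)
  obtain ⟨j, hj⟩ := exists_forall_eq_of_follows_least hα₀ hstart fun i hi hiγ hv => by
    rw [hF i hiγ]
    refine nodeValue_candidateCode hP hpr hinj hν hiγ ?_ hv
    rw [hΨ i (hθα₀.le.trans hi) hiγ]
    exact (ladderColouring_spec hreg hω hA hP hpr hν hmono hiγ).2
  have hc := candidate_mem (e := η ν) (A := A) (pr := pr) (j := j) (hP.nonempty ν hν)
  suffices graphOf F (rgUpTo (η ν) gam.ord) = candidate (P ν) (η ν) A pr j from this ▸ hc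
  rw [(hP.isFunGraphOn ν hν _ hc).eq_graphOf, graphOf_eq_graphOf_iff]
  rintro _ ⟨k, hk, rfl⟩
  exact (hj k hk).symm

end Colouring

theorem hasStrongUniformization_of_diamond_general (gam : Cardinal.{0})
    (hgreg : gam.IsRegular) (lam : Cardinal.{0}) (S : Set Ordinal.{0})
    (η : Ordinal.{0} → Ordinal.{0} → Ordinal.{0})
    (hη : IsLadderSystem S gam.ord η) (htl : IsTreeLike S gam.ord η)
    (hunif : HasUniformization S gam.ord lam.ord η gam)
    (hdiam : DiamondAt gam.ord) :
    HasStrongUniformization S gam.ord lam.ord gam.ord η := by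
  intro P hP1 hP2 hP3
  have hP : IsCoherentSystem S gam.ord gam.ord η P :=
    ⟨fun δ hδ => (hP1 δ hδ).1, fun δ hδ => (hP1 δ hδ).2, hP2, hP3⟩
  have hω : gam ≠ ℵ₀ := by
    rintro rfl
    exact not_diamondAt_omega0 (Cardinal.ord_aleph0 ▸ hdiam)
  have hmono : ∀ δ ∈ S, StrictMonoOn (η δ) (Iio gam.ord) := fun δ hδ => (hη δ hδ).1
  obtain ⟨pr, hpr, hinj⟩ := exists_pairing hgreg.aleph0_le
  obtain ⟨A, -, hA⟩ := hdiam
  obtain ⟨Ψ, Ψs, -, hΨs, hΨ⟩ := hunif (ladderColouring gam.ord P η A pr) fun δ hδ i hi =>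
    (ladderColouring_spec hgreg hω hA hP hpr hδ (hmono δ hδ) hi).1
  obtain ⟨F, hF0, hF⟩ := exists_ladder_recursion hmono htl
    (nodeValue gam.ord pr P fun β => A (Ψ β)) fun _ _ _ _ => nodeValue_congr _ _ _
  refine ⟨F, fun β _ => ?_, fun ν hν => graphOf_mem_of_diamond hgreg hω hA hP hpr hinj hν
    (hmono ν hν) (hΨs ν hν) (fun i hi hiγ => hΨ ν hν i hi hiγ) (hF ν hν)⟩
  by_cases hβ : ∃ δ ∈ S, ∃ i < gam.ord, η δ i = β
  · obtain ⟨δ, hδ, i, hi, rfl⟩ := hβ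
    exact hP.apply_lt_of_graphOf_mem hδ hi (hP.graphOf_mem_node hδ (hF δ hδ) i hi)
  · rw [hF0 β fun δ hδ i hi h => hβ ⟨δ, hδ, i, hi, h⟩]
    exact Cardinal.ord_pos.mpr hgreg.pos

/-- If `γ` is regular, `λ = γ⁺`, `η̄` is a tree-like ladder system on a
stationary `S ⊆ λ` of limit ordinals of cofinality `γ` with
`γ`-uniformization, and `◊_γ` holds, then `η̄` has strong
`γ`-uniformization. -/
theorem hasStrongUniformization_of_diamond (gam : Cardinal.{0})
    (hgreg : gam.IsRegular) (lam : Cardinal.{0}) (hlam : lam = Order.succ gam)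
    (S : Set Ordinal.{0}) (hSsub : S ⊆ Set.Iio lam.ord)
    (hSstat : IsStationaryIn S lam.ord)
    (hSlim : ∀ δ ∈ S, Order.IsSuccLimit δ) (hScof : ∀ δ ∈ S, δ.cof = gam)
    (η : Ordinal.{0} → Ordinal.{0} → Ordinal.{0})
    (hη : IsLadderSystem S gam.ord η) (htl : IsTreeLike S gam.ord η)
    (hunif : HasUniformization S gam.ord lam.ord η gam)
    (hdiam : DiamondAt gam.ord) :
    HasStrongUniformization S gam.ord lam.ord gam.ord η :=
  hasStrongUniformization_of_diamond_general gam hgreg lam S η hη htl hunif hdiam
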